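/- Let G = (V,E) be a simple graph, let {S₁,…,S_k} be an m-separated collection of subsets of V with m ≥ 2, and let {T₁,…,T_k} be subsets of V with S_i ⊆ T_i for each i. Suppose there exists ρ ≥ 1 such that |L*(T_i)| ≤ ρ·|L*(S_i)| for every i, and suppose ⋃_{i=1}^{k} L*(T_i) is a liar's ve-dominating set of G. Then Σ_{i=1}^{k} |L*(T_i)| ≤ ρ·|L*(V)|, where L*(V) is a minimum liar's ve-dominating set of G. -/

import Mathlib

open SimpleGraph Set

/-- The closed neighbourhood of an edge `e = uv`: `N_G[u] ∪ N_G[v]`. -/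
def edgeNbhd {V : Type*} (G : SimpleGraph V) (e : Sym2 V) : Set V :=
  {x | ∃ y ∈ e, x = y ∨ G.Adj y x}

/-- `L` is a liar's vertex-edge dominating set of the edge set `F` (neighbourhoods in `G`). -/
def IsLiarVEDomOf {V : Type*} (G : SimpleGraph V) (F : Set (Sym2 V)) (L : Set V) : Prop :=
  (∀ e ∈ F, 2 ≤ (edgeNbhd G e ∩ L).ncard) ∧
  (∀ e ∈ F, ∀ e' ∈ F, e ≠ e' →
    3 ≤ ((edgeNbhd G e ∪ edgeNbhd G e') ∩ L).ncard)

/-- `L` is a liar's vertex-edge dominating set of `G`. -/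
def IsLiarVEDom {V : Type*} (G : SimpleGraph V) (L : Set V) : Prop :=
  IsLiarVEDomOf G G.edgeSet L

/-- Edges of the subgraph of `G` induced by `S`. -/
def inducedEdges {V : Type*} (G : SimpleGraph V) (S : Set V) : Set (Sym2 V) :=
  {e ∈ G.edgeSet | ∀ x ∈ e, x ∈ S}

/-!
Every edge neighbourhood of an edge inside `Sᵢ` lies in the closed neighbourhood `N[Sᵢ]`, so
a liar's ve-dominating set `L` of `G` restricts to a liar's ve-dominating set `L ∩ N[Sᵢ]` of
the edges induced by `Sᵢ`, whence `|L*(Sᵢ)| ≤ |L ∩ N[Sᵢ]|`. Since the `Sᵢ` are more than two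
apart, the sets `N[Sᵢ]` are pairwise disjoint, so `∑ |L*(Sᵢ)| ≤ |L*(V)|`, and the ratio
hypothesis gives `∑ |L*(Tᵢ)| ≤ ρ ∑ |L*(Sᵢ)| ≤ ρ |L*(V)|`.
-/

def closedNbhdSet {V : Type*} (G : SimpleGraph V) (S : Set V) : Set V :=
  {x | ∃ s ∈ S, G.edist s x ≤ 1}

lemma edgeNbhd_subset_closedNbhdSet {V : Type*} {G : SimpleGraph V} {S : Set V} {e : Sym2 V}
    (he : e ∈ inducedEdges G S) : edgeNbhd G e ⊆ closedNbhdSet G S := by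
  rintro x ⟨y, hy, hxy⟩
  exact ⟨y, he.2 y hy, edist_le_one_iff_adj_or_eq.mpr (hxy.symm.imp_right Eq.symm)⟩

lemma disjoint_closedNbhdSet {V : Type*} {G : SimpleGraph V} {S S' : Set V}
    (hsep : ∀ u ∈ S, ∀ v ∈ S', 2 < G.edist u v) :
    Disjoint (closedNbhdSet G S) (closedNbhdSet G S') := by
  rw [Set.disjoint_left]
  rintro x ⟨u, hu, hux⟩ ⟨v, hv, hvx⟩
  have : G.edist u v ≤ 2 :=
    calc G.edist u v ≤ G.edist u x + G.edist x v := G.edist_triangle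
      _ ≤ 1 + 1 := add_le_add hux (by rwa [edist_comm])
      _ = 2 := one_add_one_eq_two
  exact (hsep u hu v hv).not_ge this

lemma IsLiarVEDomOf.inter_of_edgeNbhd_subset {V : Type*} {G : SimpleGraph V}
    {F : Set (Sym2 V)} {L B : Set V} (hL : IsLiarVEDomOf G F L)
    (hB : ∀ e ∈ F, edgeNbhd G e ⊆ B) : IsLiarVEDomOf G F (L ∩ B) := by
  have restrict : ∀ N ⊆ B, N ∩ (L ∩ B) = N ∩ L := fun N hN => by
    rw [inter_comm L B, ← inter_assoc, inter_eq_left.mpr hN]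
  refine ⟨fun e he => ?_, fun e he e' he' hne => ?_⟩
  · rw [restrict _ (hB e he)]
    exact hL.1 e he
  · rw [restrict _ (union_subset (hB e he) (hB e' he'))]
    exact hL.2 e he e' he' hne

lemma IsLiarVEDom.restrict_inducedEdges {V : Type*} {G : SimpleGraph V} {L : Set V}
    (hL : IsLiarVEDom G L) (S : Set V) :
    IsLiarVEDomOf G (inducedEdges G S) (L ∩ closedNbhdSet G S) :=
  IsLiarVEDomOf.inter_of_edgeNbhd_subset
    ⟨fun e he => hL.1 e he.1, fun e he e' he' => hL.2 e he.1 e' he'.1⟩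
    fun _ he => edgeNbhd_subset_closedNbhdSet he

lemma sum_ncard_le_of_separated {V ι : Type*} [Finite V] [Fintype ι] {G : SimpleGraph V}
    {S : ι → Set V} (hsep : ∀ i j, i ≠ j → ∀ u ∈ S i, ∀ v ∈ S j, 2 < G.edist u v)
    {LS : ι → Set V}
    (hLSMin : ∀ i, ∀ L' : Set V, IsLiarVEDomOf G (inducedEdges G (S i)) L' →
      (LS i).ncard ≤ L'.ncard)
    {L : Set V} (hL : IsLiarVEDom G L) :
    ∑ i, (LS i).ncard ≤ L.ncard :=
  calc ∑ i, (LS i).ncard ≤ ∑ i, (L ∩ closedNbhdSet G (S i)).ncard :=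
        Finset.sum_le_sum fun i _ => hLSMin i _ (hL.restrict_inducedEdges (S i))
    _ = (⋃ i, L ∩ closedNbhdSet G (S i)).ncard := by
        rw [ncard_iUnion_of_finite (fun _ => toFinite _), finsum_eq_sum_of_fintype]
        exact fun i j hij => (disjoint_closedNbhdSet (hsep i j hij)).mono
          inter_subset_right inter_subset_right
    _ ≤ L.ncard := ncard_le_ncard (iUnion_subset fun _ => inter_subset_left)

theorem stmt_3_general {V : Type*} [Fintype V] (G : SimpleGraph V) (m : ℕ) (hm : 2 ≤ m)
    (k : ℕ) (S : Fin k → Set V)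
    (hsep : ∀ i j, i ≠ j → ∀ u ∈ S i, ∀ v ∈ S j, (m : ℕ∞) < G.edist u v)
    (LS : Fin k → Set V)
    (hLSMin : ∀ i, ∀ L' : Set V, IsLiarVEDomOf G (inducedEdges G (S i)) L' →
      (LS i).ncard ≤ L'.ncard)
    (LT : Fin k → Set V)
    (ρ : ℝ) (hρ : 1 ≤ ρ)
    (hratio : ∀ i, ((LT i).ncard : ℝ) ≤ ρ * (LS i).ncard)
    (LV : Set V) (hLV : IsLiarVEDom G LV) :
    (∑ i : Fin k, ((LT i).ncard : ℝ)) ≤ ρ * LV.ncard := by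
  have hsep2 : ∀ i j, i ≠ j → ∀ u ∈ S i, ∀ v ∈ S j, 2 < G.edist u v :=
    fun i j hij u hu v hv => lt_of_le_of_lt (by exact_mod_cast hm) (hsep i j hij u hu v hv)
  have hLS : (∑ i, (LS i).ncard : ℝ) ≤ LV.ncard := by
    exact_mod_cast sum_ncard_le_of_separated hsep2 hLSMin hLV
  calc (∑ i, ((LT i).ncard : ℝ)) ≤ ∑ i, ρ * (LS i).ncard := Finset.sum_le_sum fun i _ => hratio i
    _ = ρ * ∑ i, ((LS i).ncard : ℝ) := (Finset.mul_sum _ _ _).symm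
    _ ≤ ρ * LV.ncard := mul_le_mul_of_nonneg_left hLS (zero_le_one.trans hρ)

theorem stmt_3 {V : Type*} [Fintype V] (G : SimpleGraph V) (m : ℕ) (hm : 2 ≤ m)
    (k : ℕ) (S T : Fin k → Set V)
    (hdisj : ∀ i j, i ≠ j → Disjoint (S i) (S j))
    (hsep : ∀ i j, i ≠ j → ∀ u ∈ S i, ∀ v ∈ S j, (m : ℕ∞) < G.edist u v)
    (hST : ∀ i, S i ⊆ T i)
    (LS : Fin k → Set V)
    (hLS : ∀ i, IsLiarVEDomOf G (inducedEdges G (S i)) (LS i))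
    (hLSMin : ∀ i, ∀ L' : Set V, IsLiarVEDomOf G (inducedEdges G (S i)) L' →
      (LS i).ncard ≤ L'.ncard)
    (LT : Fin k → Set V)
    (hLT : ∀ i, IsLiarVEDomOf G (inducedEdges G (T i)) (LT i))
    (hLTMin : ∀ i, ∀ L' : Set V, IsLiarVEDomOf G (inducedEdges G (T i)) L' →
      (LT i).ncard ≤ L'.ncard)
    (ρ : ℝ) (hρ : 1 ≤ ρ)
    (hratio : ∀ i, ((LT i).ncard : ℝ) ≤ ρ * (LS i).ncard)
    (hunion : IsLiarVEDom G (⋃ i, LT i))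
    (LV : Set V) (hLV : IsLiarVEDom G LV)
    (hLVMin : ∀ L' : Set V, IsLiarVEDom G L' → LV.ncard ≤ L'.ncard) :
    (∑ i : Fin k, ((LT i).ncard : ℝ)) ≤ ρ * LV.ncard :=
  stmt_3_general G m hm k S hsep LS hLSMin LT ρ hρ hratio LV hLV
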